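/- Let α > 0 and fix real numbers q_2 > q_3 > q_4. For t > q_2 define g(t) = Q_{14}Q_{23} − Q_{24}Q_{13} + Q_{34}Q_{12}, where q_1 = t, q_{ij} = q_i − q_j and Q_{ij} = q_{ij}|q_{ij}|^{−α−2}. Then g is strictly decreasing on (q_2, +∞): for all q_2 < s < t one has g(s) > g(t). -/
import Mathlib

open Real

private lemma aux_deriv (c p t : ℝ) (h : c < t) :
    HasDerivAt (fun s : ℝ => (s - c) * |s - c| ^ p) ((p + 1) * (t - c) ^ p) t := by
  have ht : 0 < t - c := sub_pos.mpr h
  have h1 : HasDerivAt (fun s : ℝ => s - c) 1 t := (hasDerivAt_id t).sub_const c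
  have h2 : HasDerivAt (fun s : ℝ => (s - c) ^ (p + 1)) ((p + 1) * (t - c) ^ p) t := by
    have := h1.rpow_const (p := p + 1) (Or.inl ht.ne')
    simpa using this
  apply h2.congr_of_eventuallyEq
  have hev : ∀ᶠ s in nhds t, 0 < s - c := by
    have : Set.Ioi c ∈ nhds t := Ioi_mem_nhds h
    filter_upwards [this] with s hs using sub_pos.mpr hs
  filter_upwards [hev] with s hs
  rw [abs_of_pos hs, Real.rpow_add_one hs.ne']
  ring

/-- With q2 > q3 > q4 fixed, the Pfaffian of the 4×4 matrix as a
function of q1 = t is strictly decreasing on (q2, +∞). -/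
theorem stmt4 (α : ℝ) (hα : 0 < α) (q2 q3 q4 : ℝ) (h23 : q3 < q2) (h34 : q4 < q3)
    (g : ℝ → ℝ)
    (hg : ∀ t, g t =
      (t - q4) * |t - q4| ^ (-α - 2) * ((q2 - q3) * |q2 - q3| ^ (-α - 2)) -
      (q2 - q4) * |q2 - q4| ^ (-α - 2) * ((t - q3) * |t - q3| ^ (-α - 2)) +
      (q3 - q4) * |q3 - q4| ^ (-α - 2) * ((t - q2) * |t - q2| ^ (-α - 2))) :
    StrictAntiOn g (Set.Ioi q2) := by
  have hgfun : g = fun t =>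
      (t - q4) * |t - q4| ^ (-α - 2) * ((q2 - q3) * |q2 - q3| ^ (-α - 2)) -
      (q2 - q4) * |q2 - q4| ^ (-α - 2) * ((t - q3) * |t - q3| ^ (-α - 2)) +
      (q3 - q4) * |q3 - q4| ^ (-α - 2) * ((t - q2) * |t - q2| ^ (-α - 2)) := funext hg
  set p : ℝ := -α - 2 with hp
  set A : ℝ := (q2 - q3) * |q2 - q3| ^ p with hA
  set B : ℝ := (q2 - q4) * |q2 - q4| ^ p with hB
  set C : ℝ := (q3 - q4) * |q3 - q4| ^ p with hC
  have h24 : q4 < q2 := h34.trans h23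
  -- key derivative fact
  have hderiv : ∀ t ∈ Set.Ioi q2, HasDerivAt g
      ((p + 1) * (t - q4) ^ p * A - B * ((p + 1) * (t - q3) ^ p)
        + C * ((p + 1) * (t - q2) ^ p)) t := by
    intro t ht
    have ht2 : q2 < t := ht
    have ht3 : q3 < t := h23.trans ht2
    have ht4 : q4 < t := h34.trans ht3
    rw [hgfun]
    exact (((aux_deriv q4 p t ht4).mul_const A).sub
      ((aux_deriv q3 p t ht3).const_mul B)).add ((aux_deriv q2 p t ht2).const_mul C)
  apply strictAntiOn_of_deriv_neg (convex_Ioi q2)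
  · intro t ht
    exact (hderiv t ht).differentiableAt.continuousAt.continuousWithinAt
  · intro t ht
    rw [interior_Ioi] at ht
    rw [(hderiv t ht).deriv]
    have ht2 : q2 < t := ht
    have ht3 : q3 < t := h23.trans ht2
    have ht4 : q4 < t := h34.trans ht3
    have hp1 : p + 1 < 0 := by rw [hp]; linarith
    have hpneg : p < 0 := by rw [hp]; linarith
    -- rewrite abs
    have hAval : A = (q2 - q3) ^ (p + 1) := by
      rw [hA, abs_of_pos (by linarith), Real.rpow_add_one (sub_pos.mpr h23).ne']; ring
    have hBval : B = (q2 - q4) ^ (p + 1) := by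
      rw [hB, abs_of_pos (by linarith), Real.rpow_add_one (sub_pos.mpr h24).ne']; ring
    have hCval : C = (q3 - q4) ^ (p + 1) := by
      rw [hC, abs_of_pos (by linarith), Real.rpow_add_one (sub_pos.mpr h34).ne']; ring
    have hApos : 0 < A := by rw [hAval]; exact Real.rpow_pos_of_pos (by linarith) _
    have hBC : B < C := by
      rw [hBval, hCval]
      exact Real.rpow_lt_rpow_of_neg (by linarith) (by linarith) hp1
    have hx : (t - q3) ^ p < (t - q2) ^ p :=
      Real.rpow_lt_rpow_of_neg (by linarith) (by linarith) hpneg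
    have hBpos : 0 < B := by rw [hBval]; exact Real.rpow_pos_of_pos (by linarith) _
    have hx2pos : 0 < (t - q3) ^ p := Real.rpow_pos_of_pos (by linarith) _
    have hkey : B * (t - q3) ^ p < C * (t - q2) ^ p :=
      mul_lt_mul hBC hx.le hx2pos (by rw [hCval]; exact (Real.rpow_pos_of_pos (by linarith) _).le)
    have h1pos : 0 < (t - q4) ^ p * A := by
      have h' : (0:ℝ) < (t - q4) ^ p := Real.rpow_pos_of_pos (by linarith) _
      exact mul_pos h' hApos
    nlinarith [h1pos, hkey, hp1]
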